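/- For all t > 0 and y ∈ ℝ, |q_y(t,1,y)| ≤ √(2/(πe)) · (1/t), where q_y is the partial derivative in the third argument of q(t,x,y) = (2πt)^{-1/2}(e^{-(x-y)²/(2t)} - e^{-(x+y)²/(2t)}). -/

import Mathlib

/-!
With `u = x - y` and `v = x + y`, the derivative is
`∂_y q(t,x,y) = (2πt)^{-1/2} t⁻¹ (u e^{-u²/(2t)} + v e^{-v²/(2t)})`.
Squaring and applying `s e^{-s} ≤ e^{-1}` to `s = u²/t` gives `|u| e^{-u²/(2t)} ≤ √(t/e)`,
and `2√(t/e) / √(2πt) = √(2/(πe))`.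
-/

open Real

noncomputable def q (t x y : ℝ) : ℝ :=
  (Real.sqrt (2 * Real.pi * t))⁻¹ *
    (Real.exp (-(x - y) ^ 2 / (2 * t)) - Real.exp (-(x + y) ^ 2 / (2 * t)))

lemma abs_mul_exp_neg_sq_div_le {t : ℝ} (ht : 0 < t) (u : ℝ) :
    |u| * exp (-u ^ 2 / (2 * t)) ≤ √(t / exp 1) := by
  have hsq : (|u| * exp (-u ^ 2 / (2 * t))) ^ 2 = t * (u ^ 2 / t * exp (-(u ^ 2 / t))) := by
    rw [mul_pow, sq_abs, ← exp_nat_mul]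
    field_simp
    ring_nf
  rw [le_sqrt (by positivity) (by positivity), hsq, div_eq_mul_inv t, ← exp_neg]
  exact mul_le_mul_of_nonneg_left (mul_exp_neg_le_exp_neg_one _) ht.le

lemma inv_sqrt_two_pi_mul_mul_sqrt {t : ℝ} (ht : 0 < t) :
    (√(2 * π * t))⁻¹ * (2 * √(t / exp 1)) = √(2 / (π * exp 1)) := by
  rw [show (2 : ℝ) = √4 by rw [show (4 : ℝ) = 2 ^ 2 by norm_num, sqrt_sq zero_le_two],
    ← sqrt_mul zero_le_four, ← div_eq_inv_mul, ← sqrt_div' _ (by positivity)]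
  congr 1
  field_simp
  norm_num

lemma hasDerivAt_q (t x y : ℝ) :
    HasDerivAt (q t x) ((√(2 * π * t))⁻¹ *
      (((x - y) * exp (-(x - y) ^ 2 / (2 * t)) + (x + y) * exp (-(x + y) ^ 2 / (2 * t))) / t)) y := by
  have hminus : HasDerivAt (fun y ↦ -(x - y) ^ 2 / (2 * t)) ((x - y) / t) y := by
    refine ((((hasDerivAt_id y).const_sub x).pow 2).neg.div_const (2 * t)).congr_deriv ?_
    simp only [id]; ring
  have hplus : HasDerivAt (fun y ↦ -(x + y) ^ 2 / (2 * t)) (-(x + y) / t) y := by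
    refine ((((hasDerivAt_id y).const_add x).pow 2).neg.div_const (2 * t)).congr_deriv ?_
    simp only [id]; ring
  refine ((hminus.exp.sub hplus.exp).const_mul (√(2 * π * t))⁻¹).congr_deriv ?_
  ring

lemma abs_deriv_q_le {t : ℝ} (ht : 0 < t) (x y : ℝ) :
    |deriv (q t x) y| ≤ √(2 / (π * exp 1)) * (1 / t) := by
  rw [(hasDerivAt_q t x y).deriv, ← inv_sqrt_two_pi_mul_mul_sqrt ht, abs_mul,
    abs_of_nonneg (by positivity), abs_div, abs_of_pos ht, mul_one_div, mul_div_assoc]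
  gcongr
  calc _ ≤ |(x - y) * exp (-(x - y) ^ 2 / (2 * t))| + |(x + y) * exp (-(x + y) ^ 2 / (2 * t))| :=
        abs_add_le _ _
    _ ≤ √(t / exp 1) + √(t / exp 1) := by
        simp only [abs_mul, abs_exp]
        exact add_le_add (abs_mul_exp_neg_sq_div_le ht _) (abs_mul_exp_neg_sq_div_le ht _)
    _ = 2 * √(t / exp 1) := by ring

theorem stmt_11 (t y : ℝ) (ht : 0 < t) :
    |deriv (fun y' => q t 1 y') y| ≤ Real.sqrt (2 / (Real.pi * Real.exp 1)) * (1 / t) :=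
  abs_deriv_q_le ht 1 y
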